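/- Let A = {U₁, L₁, U, L} be a four-letter alphabet and let f be the monoid endomorphism of the free monoid on A determined by f(U₁) = U₁·U·L₁, f(L₁) = U₁·L·L₁, f(U) = U, f(L) = L. For every word w over A: if the word f(w) contains a factor of the form Q·Q with Q a nonempty word, then w itself contains a factor of the form Q'·Q' with Q' a nonempty word. Equivalently, f maps square-free words to square-free words. -/

import Mathlib

/-- The four-letter alphabet `{U₁, L₁, U, L}`. -/
inductive Letter : Type
  | U1 | L1 | U | L
  deriving DecidableEq

instance instFintypeLetter : Fintype Letter :=
  ⟨{Letter.U1, Letter.L1, Letter.U, Letter.L}, fun x => by cases x <;> simp⟩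

/-- The substitution `f(U₁) = U₁UL₁`, `f(L₁) = U₁LL₁`, `f(U) = U`, `f(L) = L`,
as a monoid endomorphism of the free monoid on `Letter`. -/
def subst : FreeMonoid Letter →* FreeMonoid Letter :=
  FreeMonoid.lift fun a =>
    match a with
    | Letter.U1 => FreeMonoid.of Letter.U1 * FreeMonoid.of Letter.U * FreeMonoid.of Letter.L1
    | Letter.L1 => FreeMonoid.of Letter.U1 * FreeMonoid.of Letter.L * FreeMonoid.of Letter.L1
    | Letter.U => FreeMonoid.of Letter.U
    | Letter.L => FreeMonoid.of Letter.L

namespace SqfAux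

open Letter

/-- The substitution as a function on lists of letters, letter-by-letter. -/
def code : Letter → List Letter
  | .U1 => [.U1, .U, .L1]
  | .L1 => [.U1, .L, .L1]
  | .U  => [.U]
  | .L  => [.L]

/-- The middle letter of the code block of a marker letter. -/
def mid : Letter → Letter
  | .U1 => .U
  | .L1 => .L
  | x => x

/-- `c` is one of the marker letters `U₁, L₁`. -/
def Mrk (c : Letter) : Prop := c = .U1 ∨ c = .L1

lemma code_mrk {c : Letter} (h : Mrk c) : code c = [.U1, mid c, .L1] := by
  rcases h with rfl | rfl <;> rfl

lemma mid_ne_U1 {c : Letter} (h : Mrk c) : mid c ≠ .U1 := by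
  rcases h with rfl | rfl <;> simp [mid]

lemma mid_ne_L1 {c : Letter} (h : Mrk c) : mid c ≠ .L1 := by
  rcases h with rfl | rfl <;> simp [mid]

lemma mid_inj {c c' : Letter} (h : Mrk c) (h' : Mrk c') (e : mid c = mid c') : c = c' := by
  rcases h with rfl | rfl <;> rcases h' with rfl | rfl <;> simp_all [mid]

/-- The substitution on lists. -/
def enc : List Letter → List Letter
  | [] => []
  | d :: w => code d ++ enc w

@[simp] lemma enc_nil : enc [] = [] := rfl
@[simp] lemma enc_cons (d : Letter) (w : List Letter) : enc (d :: w) = code d ++ enc w := rfl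

@[simp] lemma enc_append (u v : List Letter) : enc (u ++ v) = enc u ++ enc v := by
  induction u with
  | nil => simp
  | cons d u ih => simp [ih]

lemma enc_eq_nil {v : List Letter} (h : enc v = []) : v = [] := by
  cases v with
  | nil => rfl
  | cons d v => cases d <;> simp [code] at h

/-- No `enc` word starts with `L₁`. -/
lemma noL1start {v t : List Letter} (h : enc v = .L1 :: t) : False := by
  cases v with
  | nil => simp at h
  | cons d v => cases d <;> simp [code] at h

/-- No `enc` word starts with a non-marker letter followed by `L₁`. -/
lemma noXL1 {v t : List Letter} {x : Letter} (hx : x = .U ∨ x = .L)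
    (h : enc v = x :: .L1 :: t) : False := by
  cases v with
  | nil => simp at h
  | cons d v =>
    rcases hx with rfl | rfl <;> cases d <;> simp [code] at h <;> exact noL1start h

/-- An `enc` word starting with `U₁` starts with a full marker block. -/
lemma encStartsU1 {v t : List Letter} (h : enc v = .U1 :: t) :
    ∃ c v', Mrk c ∧ v = c :: v' ∧ t = mid c :: .L1 :: enc v' := by
  cases v with
  | nil => simp at h
  | cons d v =>
    cases d <;> simp [code] at h
    · exact ⟨.U1, v, Or.inl rfl, rfl, by simp [mid, h]⟩
    · exact ⟨.L1, v, Or.inr rfl, rfl, by simp [mid, h]⟩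

/-- The code is a prefix code: prefix relations on encodings lift to lists. -/
lemma pc : ∀ u v : List Letter, enc u <+: enc v → u <+: v := by
  intro u
  induction u with
  | nil => intro v _; exact List.nil_prefix
  | cons d u ih =>
    intro v h
    cases v with
    | nil =>
      have := List.prefix_nil.mp h
      cases d <;> simp [code] at this
    | cons e v =>
      obtain ⟨t, ht⟩ := h
      cases d <;> cases e <;> simp [code] at ht
      case U1.U1 =>
        obtain ⟨m, hm⟩ := ih v ⟨t, ht⟩
        exact ⟨m, by rw [List.cons_append, hm]⟩
      case L1.L1 =>
        obtain ⟨m, hm⟩ := ih v ⟨t, ht⟩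
        exact ⟨m, by rw [List.cons_append, hm]⟩
      case U.U =>
        obtain ⟨m, hm⟩ := ih v ⟨t, ht⟩
        exact ⟨m, by rw [List.cons_append, hm]⟩
      case L.L =>
        obtain ⟨m, hm⟩ := ih v ⟨t, ht⟩
        exact ⟨m, by rw [List.cons_append, hm]⟩

lemma enc_injective {u v : List Letter} (h : enc u = enc v) : u = v := by
  obtain ⟨t, ht⟩ := pc u v ⟨[], by simp [h]⟩
  have h2 : enc u ++ enc t = enc u := by rw [← enc_append, ht, h]
  have h3 : enc t = [] := by simpa using h2
  rw [enc_eq_nil h3, List.append_nil] at ht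
  exact ht

/-- The main synchronization (splitting) lemma: any two-way split of an encoded
word is aligned with code blocks, up to a phase of 0, 1 or 2 inside a marker block. -/
lemma split : ∀ w a b : List Letter, enc w = a ++ b →
    (∃ u v, w = u ++ v ∧ a = enc u ∧ b = enc v) ∨
    (∃ u c v, Mrk c ∧ w = u ++ c :: v ∧ a = enc u ++ [.U1] ∧
      b = mid c :: .L1 :: enc v) ∨
    (∃ u c v, Mrk c ∧ w = u ++ c :: v ∧ a = enc u ++ [.U1, mid c] ∧
      b = .L1 :: enc v) := by
  intro w
  induction w with
  | nil =>
    intro a b h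
    simp only [enc_nil] at h
    obtain ⟨ha, hb⟩ := List.append_eq_nil_iff.mp h.symm
    exact Or.inl ⟨[], [], rfl, by simp [ha], by simp [hb]⟩
  | cons d w ih =>
    intro a b h
    cases a with
    | nil => exact Or.inl ⟨[], d :: w, rfl, rfl, by simpa using h.symm⟩
    | cons e a =>
      cases d <;> simp [code] at h
      case U1 =>
        obtain ⟨rfl, h⟩ := h
        cases a with
        | nil =>
          refine Or.inr (Or.inl ⟨[], .U1, w, Or.inl rfl, rfl, rfl, ?_⟩)
          simpa [mid] using h.symm
        | cons e2 a =>
          simp at h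
          obtain ⟨rfl, h⟩ := h
          cases a with
          | nil =>
            refine Or.inr (Or.inr ⟨[], .U1, w, Or.inl rfl, rfl, by simp [mid], ?_⟩)
            simpa using h.symm
          | cons e3 a =>
            simp at h
            obtain ⟨rfl, h⟩ := h
            rcases ih a b h with ⟨u, v, rfl, rfl, rfl⟩ |
              ⟨u, c, v, hc, rfl, rfl, rfl⟩ | ⟨u, c, v, hc, rfl, rfl, rfl⟩
            · exact Or.inl ⟨.U1 :: u, v, rfl, by simp [code], rfl⟩
            · exact Or.inr (Or.inl ⟨.U1 :: u, c, v, hc, rfl, by simp [code], rfl⟩)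
            · exact Or.inr (Or.inr ⟨.U1 :: u, c, v, hc, rfl, by simp [code], rfl⟩)
      case L1 =>
        obtain ⟨rfl, h⟩ := h
        cases a with
        | nil =>
          refine Or.inr (Or.inl ⟨[], .L1, w, Or.inr rfl, rfl, rfl, ?_⟩)
          simpa [mid] using h.symm
        | cons e2 a =>
          simp at h
          obtain ⟨rfl, h⟩ := h
          cases a with
          | nil =>
            refine Or.inr (Or.inr ⟨[], .L1, w, Or.inr rfl, rfl, by simp [mid], ?_⟩)
            simpa using h.symm
          | cons e3 a =>
            simp at h
            obtain ⟨rfl, h⟩ := h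
            rcases ih a b h with ⟨u, v, rfl, rfl, rfl⟩ |
              ⟨u, c, v, hc, rfl, rfl, rfl⟩ | ⟨u, c, v, hc, rfl, rfl, rfl⟩
            · exact Or.inl ⟨.L1 :: u, v, rfl, by simp [code], rfl⟩
            · exact Or.inr (Or.inl ⟨.L1 :: u, c, v, hc, rfl, by simp [code], rfl⟩)
            · exact Or.inr (Or.inr ⟨.L1 :: u, c, v, hc, rfl, by simp [code], rfl⟩)
      case U =>
        obtain ⟨rfl, h⟩ := h
        rcases ih a b h with ⟨u, v, rfl, rfl, rfl⟩ |
          ⟨u, c, v, hc, rfl, rfl, rfl⟩ | ⟨u, c, v, hc, rfl, rfl, rfl⟩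
        · exact Or.inl ⟨.U :: u, v, rfl, by simp [code], rfl⟩
        · exact Or.inr (Or.inl ⟨.U :: u, c, v, hc, rfl, by simp [code], rfl⟩)
        · exact Or.inr (Or.inr ⟨.U :: u, c, v, hc, rfl, by simp [code], rfl⟩)
      case L =>
        obtain ⟨rfl, h⟩ := h
        rcases ih a b h with ⟨u, v, rfl, rfl, rfl⟩ |
          ⟨u, c, v, hc, rfl, rfl, rfl⟩ | ⟨u, c, v, hc, rfl, rfl, rfl⟩
        · exact Or.inl ⟨.L :: u, v, rfl, by simp [code], rfl⟩
        · exact Or.inr (Or.inl ⟨.L :: u, c, v, hc, rfl, by simp [code], rfl⟩)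
        · exact Or.inr (Or.inr ⟨.L :: u, c, v, hc, rfl, by simp [code], rfl⟩)

/-- Extract the last element across an append equation. -/
lemma endsWith {α : Type*} {a b c : List α} {x : α} (h : a ++ b = c ++ [x]) (hb : b ≠ []) :
    ∃ b', b = b' ++ [x] ∧ a ++ b' = c := by
  have hb' : b = b.dropLast ++ [b.getLast hb] := (List.dropLast_append_getLast hb).symm
  rw [hb', ← List.append_assoc] at h
  obtain ⟨h1, h2⟩ := List.append_inj' h rfl
  obtain rfl : b.getLast hb = x := by simpa using h2
  exact ⟨b.dropLast, hb', h1⟩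

/-- The main combinatorial lemma, on lists: a square in an encoded word forces
a square in the original word. -/
lemma main : ∀ w P Q S : List Letter, Q ≠ [] → enc w = P ++ Q ++ Q ++ S →
    ∃ P' Q' S', Q' ≠ [] ∧ w = P' ++ Q' ++ Q' ++ S' := by
  intro w P Q S hQ henc
  have h0 := split w P (Q ++ (Q ++ S)) (by rw [henc]; simp [List.append_assoc])
  have h1 := split w (P ++ Q) (Q ++ S) (by rw [henc]; simp [List.append_assoc])
  rcases Q with _ | ⟨q1, Q1⟩
  · exact absurd rfl hQ
  rcases Q1 with _ | ⟨q2, Q2⟩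
  · -- |Q| = 1
    clear h1
    rcases h0 with ⟨u0, v0, hw0, hP0, hb0⟩ | ⟨u0, c0, v0, hm0, hw0, hP0, hb0⟩ |
      ⟨u0, c0, v0, hm0, hw0, hP0, hb0⟩
    · simp only [List.cons_append, List.nil_append] at hb0
      -- hb0 : q1 :: q1 :: S = enc v0
      rcases v0 with _ | ⟨d, v0⟩
      · simp at hb0
      · cases d <;> simp [code] at hb0
        · rcases hb0 with ⟨rfl, h', -⟩; simp at h'
        · rcases hb0 with ⟨rfl, h', -⟩; simp at h'
        · -- d = U : q1 = U and U :: S = enc v0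
          obtain ⟨rfl, hb0⟩ := hb0
          rcases v0 with _ | ⟨d', v0⟩
          · simp at hb0
          · cases d' <;> simp [code] at hb0
            exact ⟨u0, [.U], v0, by simp, by simp [hw0]⟩
        · obtain ⟨rfl, hb0⟩ := hb0
          rcases v0 with _ | ⟨d', v0⟩
          · simp at hb0
          · cases d' <;> simp [code] at hb0
            exact ⟨u0, [.L], v0, by simp, by simp [hw0]⟩
    · simp only [List.cons_append, List.nil_append] at hb0
      -- hb0 : q1 :: q1 :: S = mid c0 :: L1 :: enc v0
      injection hb0 with e1 hb0
      injection hb0 with e2 hb0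
      exact absurd (by rw [← e1]; exact e2) (mid_ne_L1 hm0)
    · simp only [List.cons_append, List.nil_append] at hb0
      -- hb0 : q1 :: q1 :: S = L1 :: enc v0
      injection hb0 with e1 hb0
      subst e1
      exact absurd hb0.symm noL1start
  · -- |Q| ≥ 2 : Q = q1 :: q2 :: Q2
    rcases h0 with ⟨u0, v0, hw0, hP0, hb0⟩ | ⟨u0, c0, v0, hm0, hw0, hP0, hb0⟩ |
        ⟨u0, c0, v0, hm0, hw0, hP0, hb0⟩ <;>
      rcases h1 with ⟨u1, v1, hw1, hP1, hb1⟩ | ⟨u1, c1, v1, hm1, hw1, hP1, hb1⟩ |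
        ⟨u1, c1, v1, hm1, hw1, hP1, hb1⟩ <;>
      simp only [List.cons_append] at hb0 hb1
    · -- (0,0)
      rw [hP0] at hP1
      obtain ⟨m1, hm1⟩ := pc u0 u1 ⟨q1 :: q2 :: Q2, hP1⟩
      have hencm1 : enc m1 = q1 :: q2 :: Q2 := by
        have h2 : enc u0 ++ enc m1 = enc u0 ++ (q1 :: q2 :: Q2) := by
          rw [← enc_append, hm1, ← hP1]
        exact List.append_cancel_left h2
      have hm1ne : m1 ≠ [] := by intro h; rw [h] at hencm1; simp at hencm1
      obtain ⟨rest, hrest⟩ := pc m1 v1 ⟨S, by rw [hencm1]; exact hb1⟩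
      refine ⟨u0, m1, rest, hm1ne, ?_⟩
      rw [hw1, ← hm1, ← hrest]; simp
    · -- (0,1)
      injection hb1 with f1 hb1
      injection hb1 with f2 hb1
      subst f2
      exact absurd hb0.symm (noXL1 (by rcases hm1 with rfl | rfl <;> simp [f1, mid]))
    · -- (0,2)
      injection hb1 with f1 hb1
      subst f1
      exact absurd hb0.symm noL1start
    · -- (1,0)
      injection hb0 with e1 hb0
      injection hb0 with e2 hb0
      subst e2
      exact absurd hb1.symm (noXL1 (by rcases hm0 with rfl | rfl <;> simp [e1, mid]))
    · -- (1,1)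
      injection hb0 with e1 hb0
      injection hb0 with e2 hb0
      injection hb1 with f1 hb1
      injection hb1 with f2 hb1
      subst e1; subst e2
      -- f1 : mid c0 = mid c1, hb1 : Q2 ++ S = enc v1
      have hc01 : c0 = c1 := mid_inj hm0 hm1 f1
      rw [hP0] at hP1
      -- hP1 : (enc u0 ++ [U1]) ++ mid c0 :: L1 :: Q2 = enc u1 ++ [U1]
      rcases Q2 with _ | ⟨q3, Q3⟩
      · have hx : (enc u0 ++ [.U1, mid c0]) ++ [.L1] = enc u1 ++ [.U1] := by
          simpa [List.append_assoc] using hP1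
        have := (List.append_inj' hx rfl).2
        simp at this
      · have E : (enc u0 ++ [.U1, mid c0, .L1]) ++ (q3 :: Q3) = enc u1 ++ [.U1] := by
          simpa [List.append_assoc] using hP1
        obtain ⟨Q3', hQ3', hc⟩ := endsWith E (by simp)
        have hcode : enc (u0 ++ [c0]) = enc u0 ++ [.U1, mid c0, .L1] := by
          simp [code_mrk hm0]
        obtain ⟨m1, hm1'⟩ := pc (u0 ++ [c0]) u1 ⟨Q3', by rw [hcode]; exact hc⟩
        have hencm1 : enc m1 = Q3' := by
          have h2 : enc (u0 ++ [c0]) ++ enc m1 = enc (u0 ++ [c0]) ++ Q3' := by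
            rw [← enc_append, hm1', hcode]; exact hc.symm
          exact List.append_cancel_left h2
        have hv1 : enc m1 ++ (.U1 :: S) = enc v1 := by
          rw [hencm1, ← hb1, hQ3']; simp
        obtain ⟨rest, hrest⟩ := pc m1 v1 ⟨_, hv1⟩
        refine ⟨u0, c0 :: m1, rest, by simp, ?_⟩
        rw [hw1, ← hm1', ← hrest, ← hc01]
        simp
    · -- (1,2)
      injection hb0 with e1 hb0
      injection hb1 with f1 hb1
      exact absurd (by rw [← e1]; exact f1) (mid_ne_L1 hm0)
    · -- (2,0)
      injection hb0 with e1 hb0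
      subst e1
      exact absurd hb1.symm noL1start
    · -- (2,1)
      injection hb0 with e1 hb0
      injection hb1 with f1 hb1
      exact absurd (by rw [← f1]; exact e1) (mid_ne_L1 hm1)
    · -- (2,2)
      injection hb0 with e1 hb0
      injection hb1 with f1 hb1
      subst e1
      -- hb1 : q2 :: (Q2 ++ S) = enc v1
      rw [hP0] at hP1
      -- hP1 : (enc u0 ++ [U1, mid c0]) ++ L1 :: q2 :: Q2 = enc u1 ++ [U1, mid c1]
      have E1 : (enc u0 ++ [.U1, mid c0, .L1]) ++ (q2 :: Q2) =
          (enc u1 ++ [.U1]) ++ [mid c1] := by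
        simpa [List.append_assoc] using hP1
      obtain ⟨T', hT', h2⟩ := endsWith E1 (by simp)
      rcases T' with _ | ⟨t1, T''⟩
      · have hx : (enc u0 ++ [.U1, mid c0]) ++ [.L1] = enc u1 ++ [.U1] := by
          simpa [List.append_assoc] using h2
        have := (List.append_inj' hx rfl).2
        simp at this
      · obtain ⟨T3, hT3, h3⟩ := endsWith h2 (by simp)
        have hcode : enc (u0 ++ [c0]) = enc u0 ++ [.U1, mid c0, .L1] := by
          simp [code_mrk hm0]
        obtain ⟨m1, hm1'⟩ := pc (u0 ++ [c0]) u1 ⟨T3, by rw [hcode]; exact h3⟩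
        have hencm1 : enc m1 = T3 := by
          have h4 : enc (u0 ++ [c0]) ++ enc m1 = enc (u0 ++ [c0]) ++ T3 := by
            rw [← enc_append, hm1', hcode]; exact h3.symm
          exact List.append_cancel_left h4
        have hv1 : enc m1 ++ (.U1 :: mid c1 :: S) = enc v1 := by
          rw [hencm1, ← hb1, ← List.cons_append, hT', hT3]; simp
        obtain ⟨rest, hrest⟩ := pc m1 v1 ⟨_, hv1⟩
        have hencrest : enc rest = .U1 :: mid c1 :: S := by
          have h5 : enc m1 ++ enc rest = enc m1 ++ (.U1 :: mid c1 :: S) := by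
            rw [← enc_append, hrest, ← hv1]
          exact List.append_cancel_left h5
        obtain ⟨c', rest', hc', hrr, hmm⟩ := encStartsU1 hencrest
        injection hmm with g1 g2
        have hcc : c' = c1 := mid_inj hc' hm1 g1.symm
        subst hcc
        refine ⟨u0 ++ [c0], m1 ++ [c'], rest', by simp, ?_⟩
        rw [hw1, ← hm1', ← hrest, hrr]
        simp

/-- `subst` acts on underlying lists as `enc`. -/
lemma subst_toList (w : FreeMonoid Letter) :
    FreeMonoid.toList (subst w) = enc (FreeMonoid.toList w) := by
  induction w using FreeMonoid.recOn with
  | one => simp [enc]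
  | of_mul x xs ih =>
    rw [map_mul, FreeMonoid.toList_mul, FreeMonoid.toList_of_mul, enc_cons, ih]
    congr 1

end SqfAux

/-- If `f(w)` contains a square `Q·Q` (with `Q` nonempty), then `w` itself
contains a square; equivalently, `f` maps square-free words to square-free
words. -/
theorem subst_preserves_squarefree (w : FreeMonoid Letter)
    (h : ∃ P Q S : FreeMonoid Letter, Q ≠ 1 ∧ subst w = P * Q * Q * S) :
    ∃ P' Q' S' : FreeMonoid Letter, Q' ≠ 1 ∧ w = P' * Q' * Q' * S' := by
  obtain ⟨P, Q, S, hQ, hsub⟩ := h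
  have hl : SqfAux.enc (FreeMonoid.toList w) =
      FreeMonoid.toList P ++ FreeMonoid.toList Q ++ FreeMonoid.toList Q ++
        FreeMonoid.toList S := by
    rw [← SqfAux.subst_toList, hsub]
    simp [FreeMonoid.toList_mul]
  have hQne : FreeMonoid.toList Q ≠ [] := by
    intro hh
    exact hQ (FreeMonoid.toList.injective (by simpa using hh))
  obtain ⟨P', Q', S', hne, hw⟩ := SqfAux.main (FreeMonoid.toList w) _ _ _ hQne hl
  refine ⟨FreeMonoid.ofList P', FreeMonoid.ofList Q', FreeMonoid.ofList S', ?_, ?_⟩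
  · intro h1
    exact hne (by simpa using congrArg FreeMonoid.toList h1)
  · apply FreeMonoid.toList.injective
    simpa [FreeMonoid.toList_mul] using hw
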